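/- arXiv:1701.04526 — 3 statements merged into one kernel-verified Lean document; each statement's English description precedes it below -/
import Mathlib

section
/- Let q be a power of an odd prime. For any multiplicative characters A, B₁, …, B_n, C of 𝔽_q^× and any λ₁, …, λ_n ∈ 𝔽_q^× (all nonzero), ℙ_D^{(n)}[A; B₁,…,B_n; C; λ₁,…,λ_n] = (AC)(−1) · ( ∏_{i=1}^n B̄_i(−λ_i) ) · ℙ_D^{(n)}[C̄·B₁B₂⋯B_n; B₁,…,B_n; Ā·B₁B₂⋯B_n; λ₁⁻¹, …, λ_n⁻¹]. -/
open Finset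

/-- Jacobi sum `J(A,B) = Σ_x A(x) B(1-x)`. -/
noncomputable def jacobiSum' {F : Type} [Field F] [Fintype F] (A B : MulChar F ℂ) : ℂ :=
  ∑ x : F, A x * B (1 - x)

/-- One-variable finite-field period function `ℙ_D^{(1)}[A; B; C; λ]`. -/
noncomputable def P1 {F : Type} [Field F] [Fintype F] (A B C : MulChar F ℂ) (l : F) : ℂ :=
  ∑ y : F, A y * (C * A⁻¹) (1 - y) * B⁻¹ (1 - l * y)

/-- Two-variable finite-field Appell–Lauricella period function `ℙ_D^{(2)}`. -/
noncomputable def P2 {F : Type} [Field F] [Fintype F] (A B₁ B₂ C : MulChar F ℂ) (l₁ l₂ : F) : ℂ :=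
  ∑ y : F, A y * (C * A⁻¹) (1 - y) * B₁⁻¹ (1 - l₁ * y) * B₂⁻¹ (1 - l₂ * y)

/-- n-variable finite-field Appell–Lauricella period function `ℙ_D^{(n)}`. -/
noncomputable def PDn {F : Type} [Field F] [Fintype F] (n : ℕ) (A : MulChar F ℂ)
    (B : Fin n → MulChar F ℂ) (C : MulChar F ℂ) (l : Fin n → F) : ℂ :=
  ∑ y : F, A y * (C * A⁻¹) (1 - y) * ∏ i, (B i)⁻¹ (1 - l i * y)

/-- Normalized two-variable Appell–Lauricella function `𝔽_D^{(2)}`. -/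
noncomputable def F2 {F : Type} [Field F] [Fintype F] (A B₁ B₂ C : MulChar F ℂ) (l₁ l₂ : F) : ℂ :=
  P2 A B₁ B₂ C l₁ l₂ / jacobiSum' A (C * A⁻¹)

/-- Normalized n-variable Appell–Lauricella function `𝔽_D^{(n)}`. -/
noncomputable def FDn {F : Type} [Field F] [Fintype F] (n : ℕ) (A : MulChar F ℂ)
    (B : Fin n → MulChar F ℂ) (C : MulChar F ℂ) (l : Fin n → F) : ℂ :=
  PDn n A B C l / jacobiSum' A (C * A⁻¹)

/-- Finite-field Gauss hypergeometric function `₂𝔽₁[A,B;C;λ] = ℙ_D^{(1)}[B;A;C;λ]/J(B,C B̄)`. -/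
noncomputable def twoF1 {F : Type} [Field F] [Fintype F] (A B C : MulChar F ℂ) (l : F) : ℂ :=
  P1 B A C l / jacobiSum' B (C * B⁻¹)

open scoped Classical in
/-- `δ(x) = 1` if `x = 0`, else `0`. -/
noncomputable def deltaC {F : Type} [Field F] [Fintype F] (x : F) : ℂ :=
  if x = 0 then 1 else 0

noncomputable instance {F : Type} [Field F] [Fintype F] : Fintype (MulChar F ℂ) :=
  Fintype.ofFinite _

/-- Character binomial coefficient `(A choose χ) = -χ(-1) J(A, χ̄)`. -/
noncomputable def charBinom {F : Type} [Field F] [Fintype F] (A χ : MulChar F ℂ) : ℂ :=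
  -χ (-1) * jacobiSum' A χ⁻¹

/-!
Substituting `y ↦ y⁻¹` in the defining sum and clearing the denominators through
`1 - l y⁻¹ = (-l) (1 - l⁻¹ y) y⁻¹` turns each summand of `ℙ_D^{(n)}[A; B; C; l]` into the
corresponding summand of `ℙ_D^{(n)}[C̄ ∏ Bᵢ; B; Ā ∏ Bᵢ; l⁻¹]`, up to the constant
`(C Ā)(-1) ∏ B̄ᵢ(-lᵢ)`; the factors `y⁻¹` collect into the character `C̄ ∏ Bᵢ` evaluated at `y`.
-/

namespace MulChar

theorem prod_apply_of_isUnit {R R' : Type*} [CommMonoid R] [CommMonoidWithZero R'] {ι : Type*}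
    (s : Finset ι) (χ : ι → MulChar R R') {a : R} (ha : IsUnit a) :
    (∏ i ∈ s, χ i) a = ∏ i ∈ s, χ i a := by
  induction s using Finset.cons_induction with
  | empty => exact MulChar.one_apply ha
  | cons j s hj ih => rw [prod_cons, prod_cons, mul_apply, ih]

theorem map_one_sub_mul_inv {K R : Type*} [Field K] [CommMonoidWithZero R] (χ : MulChar K R)
    {l y : K} (hl : l ≠ 0) (hy : y ≠ 0) :
    χ (1 - l * y⁻¹) = χ (-l) * χ (1 - l⁻¹ * y) * χ⁻¹ y := by
  have h : 1 - l * y⁻¹ = -l * (1 - l⁻¹ * y) * y⁻¹ := by field_simp; ring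
  rw [h, map_mul, map_mul, inv_apply']

end MulChar

open MulChar in
theorem PDn_summand_inv {F : Type} [Field F] {n : ℕ} (A C : MulChar F ℂ)
    (B : Fin n → MulChar F ℂ) {l : Fin n → F} (hl : ∀ i, l i ≠ 0) {y : F} (hy : y ≠ 0) :
    A y⁻¹ * (C * A⁻¹) (1 - y⁻¹) * ∏ i, (B i)⁻¹ (1 - l i * y⁻¹) =
      (A * C) (-1) * (∏ i, (B i)⁻¹ (-l i)) *
        ((C⁻¹ * ∏ i, B i) y * (C * A⁻¹) (1 - y) * ∏ i, (B i)⁻¹ (1 - (l i)⁻¹ * y)) := by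
  have hA : A y⁻¹ * (C * A⁻¹)⁻¹ y = C⁻¹ y := by
    rw [← inv_apply', ← mul_apply]
    congr 1
    group
  have hsign : (C * A⁻¹) (-1) = (A * C) (-1) := by
    rw [mul_apply, mul_apply, inv_apply', inv_neg, inv_one, mul_comm]
  have h1 := map_one_sub_mul_inv (C * A⁻¹) one_ne_zero hy
  rw [one_mul, inv_one, one_mul] at h1
  rw [h1, hsign, mul_apply C⁻¹, prod_apply_of_isUnit _ _ hy.isUnit, ← hA]
  simp only [fun i => map_one_sub_mul_inv (B i)⁻¹ (hl i) hy, prod_mul_distrib, inv_inv]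
  ring

theorem PDn_eq_sum_inv {F : Type} [Field F] [Fintype F] (n : ℕ) (A : MulChar F ℂ)
    (B : Fin n → MulChar F ℂ) (C : MulChar F ℂ) (l : Fin n → F) :
    PDn n A B C l = ∑ y : F, A y⁻¹ * (C * A⁻¹) (1 - y⁻¹) * ∏ i, (B i)⁻¹ (1 - l i * y⁻¹) :=
  Fintype.sum_bijective (·⁻¹) inv_involutive.bijective _ _ fun y => by rw [inv_inv]

theorem statement_9_general (F : Type) [Field F] [Fintype F]
    (n : ℕ) (A C : MulChar F ℂ) (B : Fin n → MulChar F ℂ)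
    (l : Fin n → F) (hl : ∀ i, l i ≠ 0) :
    PDn n A B C l =
      (A * C) (-1) * (∏ i, (B i)⁻¹ (-(l i))) *
        PDn n (C⁻¹ * ∏ i, B i) B (A⁻¹ * ∏ i, B i) (fun i => (l i)⁻¹) := by
  have hCA : (A⁻¹ * ∏ i, B i) * (C⁻¹ * ∏ i, B i)⁻¹ = C * A⁻¹ := by
    rw [mul_inv, inv_inv, mul_mul_mul_comm, mul_inv_cancel, mul_one, mul_comm]
  rw [PDn_eq_sum_inv, PDn, hCA, mul_sum]
  refine sum_congr rfl fun y _ => ?_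
  rcases eq_or_ne y 0 with rfl | hy
  · simp [MulChar.map_zero]
  · exact PDn_summand_inv A C B hl hy

/-- transformation `λᵢ ↦ λᵢ⁻¹` for `ℙ_D^{(n)}`. -/
theorem statement_9 (F : Type) [Field F] [Fintype F] (hq : Odd (Fintype.card F))
    (n : ℕ) (A C : MulChar F ℂ) (B : Fin n → MulChar F ℂ)
    (l : Fin n → F) (hl : ∀ i, l i ≠ 0) :
    PDn n A B C l =
      (A * C) (-1) * (∏ i, (B i)⁻¹ (-(l i))) *
        PDn n (C⁻¹ * ∏ i, B i) B (A⁻¹ * ∏ i, B i) (fun i => (l i)⁻¹) :=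
  statement_9_general F n A C B l hl
end

section
/- Let q be a power of an odd prime. For any multiplicative characters A, B₂, C of 𝔽_q^×, any λ₁ ∈ 𝔽_q with λ₁ ≠ 0, and any λ₂ ∈ 𝔽_q, ℙ_D^{(2)}[A; ε, B₂; C; λ₁, λ₂] = ℙ_D^{(1)}[A; B₂; C; λ₂] − (B₂·C̄)(λ₁)·(Ā·C)(λ₁−1)·B̄₂(λ₁−λ₂). -/
open Finset

/-!
Since `ε(0) = 0` and `ε = 1` elsewhere, the factor `ε(1 - λ₁y)` only deletes the summand at
`y = λ₁⁻¹`, so `ℙ_D^{(2)}[A; ε, B₂; C; λ₁, λ₂]` is `ℙ_D^{(1)}[A; B₂; C; λ₂]` minus that summand.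
Writing `1 - λ₁⁻¹ = λ₁⁻¹(λ₁ - 1)` and `1 - λ₂λ₁⁻¹ = λ₁⁻¹(λ₁ - λ₂)` puts it in the stated form.
-/

theorem MulChar.apply_mul_apply_inv {F R : Type*} [Field F] [CommMonoidWithZero R]
    (χ : MulChar F R) {l : F} (hl : l ≠ 0) : χ l * χ l⁻¹ = 1 := by
  rw [← map_mul, mul_inv_cancel₀ hl, map_one]

theorem MulChar.one_apply_one_sub_mul {F R : Type*} [Field F] [CommMonoidWithZero R]
    {l y : F} (hy : y ≠ l⁻¹) : (1 : MulChar F R) (1 - l * y) = 1 :=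
  MulChar.one_apply <| isUnit_iff_ne_zero.mpr fun h ↦
    hy (eq_inv_of_mul_eq_one_right (sub_eq_zero.mp h).symm)

theorem sum_mul_one_apply_one_sub_mul {F R : Type*} [Field F] [Fintype F] [CommRing R]
    (f : F → R) {l : F} (hl : l ≠ 0) :
    ∑ y, f y * (1 : MulChar F R) (1 - l * y) = ∑ y, f y - f l⁻¹ := by
  classical
  rw [eq_sub_iff_add_eq, Fintype.sum_eq_add_sum_compl l⁻¹, Fintype.sum_eq_add_sum_compl l⁻¹ f,
    mul_inv_cancel₀ hl, sub_self, MulChar.map_zero, mul_zero, zero_add, add_comm]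
  congr 1
  refine sum_congr rfl fun y hy ↦ ?_
  rw [MulChar.one_apply_one_sub_mul (by simpa using hy), mul_one]

theorem P2_one_left {F : Type} [Field F] [Fintype F] (A B C : MulChar F ℂ) {l₁ : F}
    (hl₁ : l₁ ≠ 0) (l₂ : F) :
    P2 A 1 B C l₁ l₂ =
      P1 A B C l₂ - A l₁⁻¹ * (C * A⁻¹) (1 - l₁⁻¹) * B⁻¹ (1 - l₂ * l₁⁻¹) := by
  unfold P2 P1
  simp_rw [inv_one, mul_right_comm _ ((1 : MulChar F ℂ) _)]
  exact sum_mul_one_apply_one_sub_mul _ hl₁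

theorem P1_summand_at_inv {F : Type} [Field F] (A B C : MulChar F ℂ) {l : F} (hl : l ≠ 0)
    (m : F) :
    A l⁻¹ * (C * A⁻¹) (1 - l⁻¹) * B⁻¹ (1 - m * l⁻¹) =
      (B * C⁻¹) l * (A⁻¹ * C) (l - 1) * B⁻¹ (l - m) := by
  have hl_sub_one : (1 : F) - l⁻¹ = l⁻¹ * (l - 1) := by field_simp
  have hl_sub_m : (1 : F) - m * l⁻¹ = l⁻¹ * (l - m) := by field_simp
  rw [hl_sub_one, hl_sub_m]
  simp only [MulChar.mul_apply, map_mul, MulChar.inv_apply', inv_inv]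
  linear_combination
    (C l⁻¹ * C (l - 1) * A (l - 1)⁻¹ * B l * B (l - m)⁻¹) * A.apply_mul_apply_inv hl

theorem statement_14_general (F : Type) [Field F] [Fintype F]
    (A B₂ C : MulChar F ℂ) (l₁ l₂ : F) (hl₁ : l₁ ≠ 0) :
    P2 A 1 B₂ C l₁ l₂ =
      P1 A B₂ C l₂ -
        (B₂ * C⁻¹) l₁ * (A⁻¹ * C) (l₁ - 1) * B₂⁻¹ (l₁ - l₂) := by
  rw [P2_one_left A B₂ C hl₁, P1_summand_at_inv A B₂ C hl₁]

/-- reduction of `ℙ_D^{(2)}` when `B₁ = ε`. -/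
theorem statement_14 (F : Type) [Field F] [Fintype F] (hq : Odd (Fintype.card F))
    (A B₂ C : MulChar F ℂ) (l₁ l₂ : F) (hl₁ : l₁ ≠ 0) :
    P2 A 1 B₂ C l₁ l₂ =
      P1 A B₂ C l₂ -
        (B₂ * C⁻¹) l₁ * (A⁻¹ * C) (l₁ - 1) * B₂⁻¹ (l₁ - l₂) :=
  statement_14_general F A B₂ C l₁ l₂ hl₁
end

section
/- Let q be a power of an odd prime. For any multiplicative characters A, C of 𝔽_q^× and any λ ∈ 𝔽_q with λ ≠ 1, Σ_{y∈𝔽_q} A(y)·(CĀ)(1−y)·C̄(1−λy) = Ā(λ−1)·J(A, C̄) − A(−1)·C̄(λ); equivalently, ℙ_D^{(1)}[A; C; C; λ] = Ā(λ−1)·J(A, C̄) − A(−1)·C̄(λ). -/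
open Finset

/-! The substitution `u = (1 - λ) y / (1 - y)` maps `𝔽_q ∖ {1}` bijectively onto `𝔽_q ∖ {λ - 1}`.
Since `1 - λy = (1 - y)(1 + u)` and `B = C`, the factors of `C` collapse and the summand becomes
`Ā(1 - λ) A(u) C̄(1 + u)`. The complete sum `Σ_u A(u) C̄(1 + u)` is `A(-1) J(A, C̄)` after
`u ↦ -u`, and the missing point `u = λ - 1` contributes `A(-1) C̄(λ)`. -/

namespace MulChar

variable {R R' : Type*}

lemma apply_neg_one_mul_self [CommRing R] [CommMonoidWithZero R'] (χ : MulChar R R') :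
    χ (-1) * χ (-1) = 1 := by
  rw [← map_mul, neg_one_mul, neg_neg, map_one]

lemma inv_apply_neg_one [Field R] [CommGroupWithZero R'] (χ : MulChar R R') :
    χ⁻¹ (-1) = χ (-1) := by
  rw [inv_apply', inv_neg_one]

lemma inv_apply_mul_apply [Field R] [CommGroupWithZero R'] (χ : MulChar R R') {a : R}
    (ha : a ≠ 0) : χ⁻¹ a * χ a = 1 := by
  rw [inv_apply_eq_inv']
  exact inv_mul_cancel₀ (ha.isUnit.map χ).ne_zero

end MulChar

section

variable {F : Type} [Field F]

lemma sum_erase_one_comp_moebius [Fintype F] [DecidableEq F] {M : Type*} [AddCommMonoid M]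
    {c : F} (hc : c ≠ 0) (g : F → M) :
    ∑ y ∈ univ.erase 1, g (c * y / (1 - y)) = ∑ u ∈ univ.erase (-c), g u := by
  refine sum_nbij' (fun y => c * y / (1 - y)) (fun u => u / (u + c)) ?_ ?_ ?_ ?_
    fun _ _ => rfl
  · intro y hy
    have hy' : 1 - y ≠ 0 := sub_ne_zero.mpr (ne_of_mem_erase hy).symm
    refine mem_erase.mpr ⟨fun h => hc ?_, mem_univ _⟩
    rw [div_eq_iff hy'] at h
    linear_combination h
  · intro u hu
    have hu' : u + c ≠ 0 := fun h => ne_of_mem_erase hu (eq_neg_of_add_eq_zero_left h)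
    refine mem_erase.mpr ⟨fun h => hc ?_, mem_univ _⟩
    rw [div_eq_one_iff_eq hu'] at h
    linear_combination -h
  · intro y hy
    have hy' : 1 - y ≠ 0 := sub_ne_zero.mpr (ne_of_mem_erase hy).symm
    field_simp
    ring
  · intro u hu
    have hu' : u + c ≠ 0 := fun h => ne_of_mem_erase hu (eq_neg_of_add_eq_zero_left h)
    have hsub : 1 - u / (u + c) = c / (u + c) := by
      field_simp
      ring
    rw [hsub]
    field_simp

lemma summand_eq_moebius (A C : MulChar F ℂ) {l y : F} (hl : l ≠ 1) (hy : y ≠ 1) :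
    A y * (C * A⁻¹) (1 - y) * C⁻¹ (1 - l * y) =
      A⁻¹ (1 - l) * (A ((1 - l) * y / (1 - y)) * C⁻¹ (1 + (1 - l) * y / (1 - y))) := by
  have hy' : 1 - y ≠ 0 := sub_ne_zero.mpr hy.symm
  have hfactor : 1 + (1 - l) * y / (1 - y) = (1 - l * y) * (1 - y)⁻¹ := by
    field_simp
    ring
  have hcancel := MulChar.inv_apply_mul_apply A (sub_ne_zero.mpr hl.symm)
  rw [hfactor]
  simp only [div_eq_mul_inv, map_mul, MulChar.coeToFun_mul, Pi.mul_apply]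
  rw [MulChar.inv_apply' C (1 - y)⁻¹, inv_inv, ← MulChar.inv_apply' A]
  linear_combination -(A y * A⁻¹ (1 - y) * C⁻¹ (1 - l * y) * C (1 - y)) * hcancel

lemma sum_apply_mul_apply_one_add [Fintype F] (A B : MulChar F ℂ) :
    ∑ u : F, A u * B (1 + u) = A (-1) * jacobiSum' A B := by
  rw [jacobiSum', mul_sum]
  refine Fintype.sum_equiv (Equiv.neg F) _ _ fun u => ?_
  rw [Equiv.neg_apply, sub_neg_eq_add, ← mul_assoc, ← map_mul, neg_one_mul, neg_neg]

theorem sum_apply_mul_apply_mul_inv_apply_eq [Fintype F] (A C : MulChar F ℂ) {l : F}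
    (hl : l ≠ 1) :
    ∑ y : F, A y * (C * A⁻¹) (1 - y) * C⁻¹ (1 - l * y) =
      A⁻¹ (l - 1) * jacobiSum' A C⁻¹ - A (-1) * C⁻¹ l := by
  classical
  have hc : 1 - l ≠ 0 := sub_ne_zero.mpr hl.symm
  have hsplit : A⁻¹ (1 - l) = A (-1) * A⁻¹ (l - 1) := by
    rw [← MulChar.inv_apply_neg_one, ← map_mul, neg_one_mul, neg_sub]
  set g : F → ℂ := fun u => A u * C⁻¹ (1 + u)
  calc ∑ y : F, A y * (C * A⁻¹) (1 - y) * C⁻¹ (1 - l * y)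
      = ∑ y ∈ univ.erase 1, A y * (C * A⁻¹) (1 - y) * C⁻¹ (1 - l * y) :=
        (sum_erase _ (by simp [MulChar.map_zero])).symm
    _ = ∑ y ∈ univ.erase 1, A⁻¹ (1 - l) * g ((1 - l) * y / (1 - y)) :=
        sum_congr rfl fun y hy => summand_eq_moebius A C hl (ne_of_mem_erase hy)
    _ = A⁻¹ (1 - l) * (∑ u : F, g u - g (l - 1)) := by
        rw [← mul_sum, sum_erase_one_comp_moebius hc, neg_sub, sum_erase_eq_sub (mem_univ _)]
    _ = A⁻¹ (l - 1) * jacobiSum' A C⁻¹ - A (-1) * C⁻¹ l := by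
        rw [sum_apply_mul_apply_one_add, hsplit]
        simp only [g, add_sub_cancel]
        linear_combination (A⁻¹ (l - 1) * jacobiSum' A C⁻¹) * A.apply_neg_one_mul_self
          - A (-1) * C⁻¹ l * MulChar.inv_apply_mul_apply A (sub_ne_zero.mpr hl)

end

theorem statement_19_general (F : Type) [Field F] [Fintype F]
    (A C : MulChar F ℂ) (l : F) (hl : l ≠ 1) :
    (∑ y : F, A y * (C * A⁻¹) (1 - y) * C⁻¹ (1 - l * y)) =
      A⁻¹ (l - 1) * jacobiSum' A C⁻¹ - A (-1) * C⁻¹ l ∧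
    P1 A C C l = A⁻¹ (l - 1) * jacobiSum' A C⁻¹ - A (-1) * C⁻¹ l :=
  have h := sum_apply_mul_apply_mul_inv_apply_eq A C hl
  ⟨h, h⟩

/-- evaluation of `ℙ_D^{(1)}[A; C; C; λ]` for `λ ≠ 1`. -/
theorem statement_19 (F : Type) [Field F] [Fintype F] (hq : Odd (Fintype.card F))
    (A C : MulChar F ℂ) (l : F) (hl : l ≠ 1) :
    (∑ y : F, A y * (C * A⁻¹) (1 - y) * C⁻¹ (1 - l * y)) =
      A⁻¹ (l - 1) * jacobiSum' A C⁻¹ - A (-1) * C⁻¹ l ∧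
    P1 A C C l = A⁻¹ (l - 1) * jacobiSum' A C⁻¹ - A (-1) * C⁻¹ l :=
  statement_19_general F A C l hl
end
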